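/- Let I = [0,R) for some 0 < R ≤ ∞, and let f : I → ℝ. Suppose there exists a connected, non-complete finite simple graph G with at least 3 vertices such that f_G[A] ∈ P_G for every A ∈ P_G(I). Then f is superadditive on I (f(x+y) ≥ f(x) + f(y) whenever x, y, x+y ∈ I) and multiplicatively midpoint-convex on I (f(√(xy))² ≤ f(x)·f(y) for all x,y ∈ I). -/

import Mathlib

/-!
A connected, non-complete graph contains an induced path `p - q - r`, and a positivity
preserver on `G` restricts to the induced graphs on `{p, q, r}` and `{p, q}`, since a test
matrix there can be extended by zero. On the path, the test matrix
`x (1,1,0)(1,1,0)ᵀ + y (0,1,1)(0,1,1)ᵀ` is sent to a matrix whose quadratic form at `(1,-1,1)`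
is `f (x + y) - f x - f y`. On the edge, the rank-one matrix `(√x, √y)(√x, √y)ᵀ` is sent to
`!![f x, f √(xy); f √(xy), f y]`, whose determinant is nonnegative.
-/

open Matrix
open scoped Classical ENNReal

/-- `A` has zeros according to the graph `G`: off-diagonal entries at non-edges vanish. -/
def sparsePattern {n : ℕ} (G : SimpleGraph (Fin n)) (A : Matrix (Fin n) (Fin n) ℝ) : Prop :=
  ∀ i j, i ≠ j → ¬ G.Adj i j → A i j = 0

/-- `A ∈ P_G(I)`: `A` is positive semidefinite, has entries in `I`,
and has zeros according to `G`. -/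
def memPG {n : ℕ} (G : SimpleGraph (Fin n)) (I : Set ℝ) (A : Matrix (Fin n) (Fin n) ℝ) : Prop :=
  A.PosSemidef ∧ (∀ i j, A i j ∈ I) ∧ sparsePattern G A

/-- The entrywise application `f_G[A]` of `f` to `A` according to the graph `G`. -/
noncomputable def applyG {n : ℕ} (G : SimpleGraph (Fin n)) (f : ℝ → ℝ)
    (A : Matrix (Fin n) (Fin n) ℝ) : Matrix (Fin n) (Fin n) ℝ :=
  Matrix.of fun i j => if i = j ∨ G.Adj i j then f (A i j) else 0

namespace SimpleGraph

variable {V : Type*} {G : SimpleGraph V}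

theorem eq_or_adj_of_reachable
    (htrans : ∀ p q r, G.Adj p q → G.Adj q r → p ≠ r → G.Adj p r) {u v : V}
    (huv : G.Reachable u v) : u = v ∨ G.Adj u v := by
  rw [reachable_iff_reflTransGen] at huv
  induction huv with
  | refl => exact .inl rfl
  | @tail w x _ hwx ih =>
    rcases ih with rfl | huw
    · exact .inr hwx
    · by_cases hux : u = x
      · exact .inl hux
      · exact .inr (htrans u w x huw hwx hux)

theorem Connected.exists_adj_adj_not_adj (hG : G.Connected)
    (hne : ∃ i j, i ≠ j ∧ ¬G.Adj i j) :
    ∃ p q r, G.Adj p q ∧ G.Adj q r ∧ p ≠ r ∧ ¬G.Adj p r := by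
  by_contra! htrans
  obtain ⟨i, j, hij, hnadj⟩ := hne
  exact (eq_or_adj_of_reachable htrans (hG i j)).elim hij hnadj

end SimpleGraph

theorem Matrix.exists_posSemidef_submatrix_eq {m n : Type*} [Fintype m] [Fintype n]
    [DecidableEq n] {e : m → n} (he : Function.Injective e) {B : Matrix m m ℝ}
    (hB : B.PosSemidef) :
    ∃ A : Matrix n n ℝ, A.PosSemidef ∧ A.submatrix e e = B ∧
      ∀ i j, (i ∉ Set.range e ∨ j ∉ Set.range e) → A i j = 0 := by
  let P : Matrix n m ℝ := of fun i k => if i = e k then 1 else 0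
  refine ⟨P * B * Pᵀ, hB.mul_mul_conjTranspose_same P, ?_, ?_⟩
  · ext k l
    simp [P, Matrix.mul_apply, he.eq_iff]
  · rintro i j (hi | hj)
    · have hP : ∀ k, P i k = 0 := fun k => if_neg fun h => hi ⟨k, h.symm⟩
      simp [Matrix.mul_apply, hP]
    · have hP : ∀ l, P j l = 0 := fun l => if_neg fun h => hj ⟨l, h.symm⟩
      simp [Matrix.mul_apply, hP]

section PreservesPositivity

variable {m n : ℕ} {I : Set ℝ} {f : ℝ → ℝ}

def PreservesPositivity (G : SimpleGraph (Fin n)) (I : Set ℝ) (f : ℝ → ℝ) : Prop :=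
  ∀ A, memPG G I A → memPG G Set.univ (applyG G f A)

theorem sparsePattern_applyG (G : SimpleGraph (Fin n)) (f : ℝ → ℝ)
    (A : Matrix (Fin n) (Fin n) ℝ) : sparsePattern G (applyG G f A) :=
  fun _ _ hij hnadj => if_neg (by tauto)

theorem PreservesPositivity.comap {G : SimpleGraph (Fin n)} (hf : PreservesPositivity G I f)
    (h0 : 0 ∈ I) {e : Fin m → Fin n} (he : Function.Injective e) :
    PreservesPositivity (G.comap e) I f := by
  rintro B ⟨hB, hBI, hBsparse⟩
  obtain ⟨A, hA, hAB, hA0⟩ := exists_posSemidef_submatrix_eq he hB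
  have hAe : ∀ k l, A (e k) (e l) = B k l := fun k l => congrFun (congrFun hAB k) l
  have hAI : ∀ i j, A i j ∈ I := by
    intro i j
    by_cases h : i ∈ Set.range e ∧ j ∈ Set.range e
    · obtain ⟨⟨k, rfl⟩, ⟨l, rfl⟩⟩ := h
      exact hAe k l ▸ hBI k l
    · exact hA0 i j (by tauto) ▸ h0
  have hAsparse : sparsePattern G A := by
    intro i j hij hnadj
    by_cases h : i ∈ Set.range e ∧ j ∈ Set.range e
    · obtain ⟨⟨k, rfl⟩, ⟨l, rfl⟩⟩ := h
      exact hAe k l ▸ hBsparse k l (ne_of_apply_ne e hij) hnadj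
    · exact hA0 i j (by tauto)
  refine ⟨?_, fun _ _ => trivial, sparsePattern_applyG _ _ _⟩
  convert (hf A ⟨hA, hAI, hAsparse⟩).1.submatrix e using 1
  ext k l
  simp [applyG, hAe, he.eq_iff]

theorem PreservesPositivity.apply_add_apply_le_apply_add {G : SimpleGraph (Fin 3)}
    (hf : PreservesPositivity G I f) (h01 : G.Adj 0 1) (h12 : G.Adj 1 2) (h02 : ¬G.Adj 0 2)
    (h0 : 0 ∈ I) {x y : ℝ} (hx : x ∈ I) (hy : y ∈ I) (hxy : x + y ∈ I) (hx0 : 0 ≤ x)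
    (hy0 : 0 ≤ y) : f x + f y ≤ f (x + y) := by
  let B : Matrix (Fin 3) (Fin 3) ℝ := !![x, x, 0; x, x + y, y; 0, y, y]
  have hB : B.PosSemidef := by
    have hB_eq :
        B = x • vecMulVec ![1, 1, 0] ![1, 1, 0] + y • vecMulVec ![0, 1, 1] ![0, 1, 1] := by
      ext i j
      fin_cases i <;> fin_cases j <;> simp [B, vecMulVec]
    rw [hB_eq]
    exact ((posSemidef_vecMulVec_self_star _).smul hx0).add
      ((posSemidef_vecMulVec_self_star _).smul hy0)
  have hBI : ∀ i j, B i j ∈ I := by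
    intro i j
    fin_cases i <;> fin_cases j <;> simpa [B]
  have hBsparse : sparsePattern G B := by
    intro i j _ _
    fin_cases i <;> fin_cases j <;> simp_all [B, h01.symm, h12.symm]
  have hquad := (hf B ⟨hB, hBI, hBsparse⟩).1.dotProduct_mulVec_nonneg ![1, -1, 1]
  simp [dotProduct, mulVec, Fin.sum_univ_three, applyG, B, h01, h12, h02, G.adj_comm] at hquad
  linarith

theorem PreservesPositivity.sq_apply_sqrt_mul_le_mul {G : SimpleGraph (Fin 2)}
    (hf : PreservesPositivity G I f) (h01 : G.Adj 0 1) {x y : ℝ} (hx : x ∈ I) (hy : y ∈ I)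
    (hxy : √(x * y) ∈ I) (hx0 : 0 ≤ x) (hy0 : 0 ≤ y) : f √(x * y) ^ 2 ≤ f x * f y := by
  let B : Matrix (Fin 2) (Fin 2) ℝ := !![x, √(x * y); √(x * y), y]
  have hB : B.PosSemidef := by
    have hB_eq : B = vecMulVec ![√x, √y] ![√x, √y] := by
      ext i j
      fin_cases i <;> fin_cases j <;>
        simp [B, vecMulVec, Real.sqrt_mul hx0, Real.mul_self_sqrt, hx0, hy0, mul_comm]
    rw [hB_eq]
    exact posSemidef_vecMulVec_self_star _
  have hBI : ∀ i j, B i j ∈ I := by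
    intro i j
    fin_cases i <;> fin_cases j <;> simpa [B]
  have hBsparse : sparsePattern G B := by
    intro i j _ _
    fin_cases i <;> fin_cases j <;> simp_all [B, h01.symm]
  have hfB : applyG G f B = !![f x, f √(x * y); f √(x * y), f y] := by
    ext i j
    fin_cases i <;> fin_cases j <;> simp [applyG, B, h01, h01.symm]
  have hdet := (hf B ⟨hB, hBI, hBsparse⟩).1.det_nonneg
  rw [hfB, det_fin_two_of] at hdet
  linarith

end PreservesPositivity

theorem Set.OrdConnected.sqrt_mul_mem {I : Set ℝ} (hI : I.OrdConnected) (h0 : 0 ∈ I) {x y : ℝ}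
    (hx : x ∈ I) (hy : y ∈ I) (hx0 : 0 ≤ x) : √(x * y) ∈ I := by
  have hmax : max x y ∈ I := by rcases max_choice x y with h | h <;> rw [h] <;> assumption
  refine hI.out h0 hmax ⟨Real.sqrt_nonneg _, Real.sqrt_le_iff.mpr ⟨le_max_of_le_left hx0, ?_⟩⟩
  nlinarith [le_max_left x y, le_max_right x y]

theorem stmt10 (R : ℝ≥0∞) (hR : 0 < R) (I : Set ℝ)
    (hI : I = {x : ℝ | 0 ≤ x ∧ ENNReal.ofReal x < R})
    (f : ℝ → ℝ)
    (h : ∃ (n : ℕ) (G : SimpleGraph (Fin n)), 3 ≤ n ∧ G.Connected ∧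
      (∃ i j : Fin n, i ≠ j ∧ ¬ G.Adj i j) ∧
      ∀ A : Matrix (Fin n) (Fin n) ℝ, memPG G I A → memPG G Set.univ (applyG G f A)) :
    (∀ x ∈ I, ∀ y ∈ I, x + y ∈ I → f x + f y ≤ f (x + y)) ∧
    (∀ x ∈ I, ∀ y ∈ I, (f (Real.sqrt (x * y))) ^ 2 ≤ f x * f y) := by
  obtain ⟨n, G, -, hG, hne, hf⟩ := h
  obtain ⟨p, q, r, hpq, hqr, hpr, hnpr⟩ := hG.exists_adj_adj_not_adj hne
  have h0 : (0 : ℝ) ∈ I := hI ▸ ⟨le_rfl, by simpa using hR⟩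
  have hI_nonneg : ∀ x ∈ I, 0 ≤ x := fun x hx => (hI ▸ hx).1
  have hI_conn : I.OrdConnected := hI ▸
    ⟨fun x hx y hy z hz => ⟨hx.1.trans hz.1, (ENNReal.ofReal_le_ofReal hz.2).trans_lt hy.2⟩⟩
  have hpqr : Function.Injective ![p, q, r] := by
    intro a b
    fin_cases a <;> fin_cases b <;>
      simp [hpq.ne, hqr.ne, hpr, hpq.ne.symm, hqr.ne.symm, hpr.symm]
  have hpq' : Function.Injective ![p, q] := by
    intro a b
    fin_cases a <;> fin_cases b <;> simp [hpq.ne, hpq.ne.symm]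
  refine ⟨fun x hx y hy hxy => ?_, fun x hx y hy => ?_⟩
  · exact (PreservesPositivity.comap hf h0 hpqr).apply_add_apply_le_apply_add hpq hqr hnpr h0
      hx hy hxy (hI_nonneg x hx) (hI_nonneg y hy)
  · exact (PreservesPositivity.comap hf h0 hpq').sq_apply_sqrt_mul_le_mul hpq hx hy
      (hI_conn.sqrt_mul_mem h0 hx hy (hI_nonneg x hx)) (hI_nonneg x hx) (hI_nonneg y hy)
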